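/- For every natural number n, let T_n be the Kantorovič operator K_n regarded as a continuous linear endomorphism of the complex Banach space L¹([0,1],ℂ) (i.e., T_n f is the equivalence class of the continuous function x ↦ (n+1) Σ_{k=0}^n C(n,k) x^k (1−x)^{n−k} ∫_{k/(n+1)}^{(k+1)/(n+1)} f(t) dt). Then the spectrum of T_n satisfies σ(T_n) ⊆ {λ ∈ ℂ : |λ| < 1} ∪ {1}. -/

import Mathlib

/-!
`T_n` has finite rank: `T_n f = ∑ₖ φₖ(f) bₖ` with `φₖ f = (n+1) ∫_{k/(n+1)}^{(k+1)/(n+1)} f` and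
`bₖ` the Bernstein basis polynomials. So it is compact, and by the Fredholm alternative every
nonzero `λ ∈ σ(T_n)` is an eigenvalue, and applying the `φₖ` to an eigenvector shows that `λ` is an
eigenvalue of the matrix `Aₖⱼ = φₖ(bⱼ)`. Since the `bⱼ` form a partition of unity, `A` is
row-stochastic, and its diagonal is positive; by Gershgorin `|λ - a| ≤ 1 - a` for some `a > 0`,
and this disc meets `{|λ| ≥ 1}` only at `1`.
-/

open MeasureTheory Set Module End Polynomial

section FiniteRank

variable {𝕜 E : Type*} [NontriviallyNormedField 𝕜] [NormedAddCommGroup E] [NormedSpace 𝕜 E]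

theorem IsCompactOperator.of_forall_mem_finiteDimensional [LocallyCompactSpace 𝕜]
    {T : E →L[𝕜] E} {V : Submodule 𝕜 E} [FiniteDimensional 𝕜 V] (hV : ∀ x, T x ∈ V) :
    IsCompactOperator T :=
  have := FiniteDimensional.proper 𝕜 V
  (isCompactOperator_of_locallyCompactSpace_dom (T.codRestrict V hV)).clm_comp V.subtypeL

variable {ι : Type*} [Fintype ι] [DecidableEq ι] {T : E →L[𝕜] E} {φ : ι → Dual 𝕜 E} {b : ι → E}

theorem hasEigenvalue_toLin'_of_eq_sum_smul (hT : ∀ f, T f = ∑ i, φ i f • b i) {μ : 𝕜}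
    (hμ : HasEigenvalue (T : End 𝕜 E) μ) (hμ0 : μ ≠ 0) :
    HasEigenvalue (Matrix.toLin' (Matrix.of fun i j => φ i (b j))) μ := by
  obtain ⟨f, hf, hf0⟩ := hμ.exists_hasEigenvector
  have hTf : T f = μ • f := mem_eigenspace_iff.1 hf
  refine hasEigenvalue_of_hasEigenvector (x := fun i => φ i f)
    ⟨mem_eigenspace_iff.2 ?_, fun hc => hf0 ?_⟩
  · ext i
    have := congrArg (φ i) ((hT f).symm.trans hTf)
    simpa [Matrix.mulVec, dotProduct, mul_comm] using this
  · have : μ • f = 0 := by rw [← hTf, hT f]; simp [fun i => congrFun hc i]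
    exact (smul_eq_zero.1 this).resolve_left hμ0

theorem hasEigenvalue_toLin'_of_mem_spectrum [LocallyCompactSpace 𝕜] [CompleteSpace E]
    (hT : ∀ f, T f = ∑ i, φ i f • b i) {μ : 𝕜} (hμ : μ ∈ spectrum 𝕜 T) (hμ0 : μ ≠ 0) :
    HasEigenvalue (Matrix.toLin' (Matrix.of fun i j => φ i (b j))) μ := by
  have := FiniteDimensional.span_of_finite 𝕜 (finite_range b)
  have hcompact : IsCompactOperator T :=
    .of_forall_mem_finiteDimensional (V := Submodule.span 𝕜 (range b)) fun f => by
      rw [hT f]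
      exact Submodule.sum_mem _ fun i _ =>
        Submodule.smul_mem _ _ (Submodule.subset_span (mem_range_self i))
  exact hasEigenvalue_toLin'_of_eq_sum_smul hT
    ((hcompact.hasEigenvalue_iff_mem_spectrum hμ0).2 hμ) hμ0

end FiniteRank

theorem Complex.eq_one_of_mem_closedBall_of_one_le_norm {a : ℝ} (ha : 0 < a) {z : ℂ}
    (hz : z ∈ Metric.closedBall (a : ℂ) (1 - a)) (hz1 : 1 ≤ ‖z‖) : z = 1 := by
  have hr : 0 ≤ 1 - a := Metric.nonempty_closedBall.1 ⟨z, hz⟩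
  rw [Metric.mem_closedBall, Complex.dist_eq, ← sq_le_sq₀ (norm_nonneg _) hr,
    Complex.sq_norm, Complex.normSq_apply] at hz
  rw [← one_le_sq_iff₀ (norm_nonneg _), Complex.sq_norm, Complex.normSq_apply] at hz1
  simp only [Complex.sub_re, Complex.ofReal_re, Complex.sub_im, Complex.ofReal_im, sub_zero] at hz
  have hre : 1 ≤ z.re := by nlinarith
  have hre' : z.re ≤ 1 := by nlinarith
  have him : z.im = 0 := by nlinarith
  exact Complex.ext (by simpa using le_antisymm hre' hre) (by simpa using him)

theorem Matrix.eq_one_of_hasEigenvalue_of_one_le_norm {ι : Type*} [Fintype ι] [DecidableEq ι]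
    {A : Matrix ι ι ℝ} (hA : A ∈ rowStochastic ℝ ι) (hdiag : ∀ k, 0 < A k k) {μ : ℂ}
    (hμ : HasEigenvalue (toLin' (A.map (↑))) μ) (hμ1 : 1 ≤ ‖μ‖) : μ = 1 := by
  obtain ⟨k, hk⟩ := eigenvalue_mem_ball hμ
  have hradius : ∑ j ∈ Finset.univ.erase k, ‖(A.map ((↑) : ℝ → ℂ)) k j‖ = 1 - A k k := by
    rw [← sum_row_of_mem_rowStochastic hA k, ← Finset.add_sum_erase _ _ (Finset.mem_univ k),
      add_sub_cancel_left]
    refine Finset.sum_congr rfl fun j _ => ?_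
    simp [Complex.norm_real, abs_of_nonneg (nonneg_of_mem_rowStochastic hA)]
  rw [hradius] at hk
  exact Complex.eq_one_of_mem_closedBall_of_one_le_norm (hdiag k) hk hμ1

theorem MeasureTheory.L1.integralCLM'_comp_LpToLpRestrictCLM_apply {α E : Type*} (𝕜 : Type*)
    [MeasurableSpace α] [NontriviallyNormedField 𝕜] [NormedAddCommGroup E] [NormedSpace ℝ E]
    [NormedSpace 𝕜 E] [SMulCommClass ℝ 𝕜 E] [CompleteSpace E] {μ : Measure α} (s : Set α)
    (f : α →₁[μ] E) :
    (L1.integralCLM' 𝕜).comp (LpToLpRestrictCLM α E 𝕜 μ 1 s) f = ∫ x in s, f x ∂μ := by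
  rw [ContinuousLinearMap.comp_apply, ← L1.integral_eq', L1.integral_eq_integral]
  exact integral_congr_ae (LpToLpRestrictCLM_coeFn 𝕜 s f)

theorem intervalIntegral.integral_restrict_of_Ioc_subset {E : Type*} [NormedAddCommGroup E]
    [NormedSpace ℝ E] {μ : Measure ℝ} {s : Set ℝ} {a b : ℝ} (hab : a ≤ b) (h : Ioc a b ⊆ s)
    (g : ℝ → E) : ∫ t in a..b, g t ∂(μ.restrict s) = ∫ t in a..b, g t ∂μ := by
  rw [integral_of_le hab, integral_of_le hab, Measure.restrict_restrict measurableSet_Ioc,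
    inter_eq_left.2 h]

namespace bernsteinPolynomial

variable (n : ℕ)

theorem ofReal_eval (k : ℕ) (x : ℝ) :
    (((bernsteinPolynomial ℝ n k).eval x : ℝ) : ℂ) =
      n.choose k * (x : ℂ) ^ k * (1 - x) ^ (n - k) := by
  simp [bernsteinPolynomial]

theorem eval_nonneg (k : ℕ) {x : ℝ} (hx : x ∈ Icc (0 : ℝ) 1) :
    0 ≤ (bernsteinPolynomial ℝ n k).eval x := by
  have := hx.1
  have : 0 ≤ 1 - x := sub_nonneg.2 hx.2
  simp only [bernsteinPolynomial, eval_mul, eval_natCast, eval_pow, eval_X, eval_sub, eval_one]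
  positivity

theorem eval_pos {k : ℕ} (hk : k ≤ n) {x : ℝ} (hx : x ∈ Ioo (0 : ℝ) 1) :
    0 < (bernsteinPolynomial ℝ n k).eval x := by
  have := hx.1
  have : 0 < 1 - x := sub_pos.2 hx.2
  have : 0 < (n.choose k : ℝ) := by exact_mod_cast Nat.choose_pos hk
  simp only [bernsteinPolynomial, eval_mul, eval_natCast, eval_pow, eval_X, eval_sub, eval_one]
  positivity

end bernsteinPolynomial

namespace Kantorovich

local notation "μ₀₁" => volume.restrict (Icc (0 : ℝ) 1)

variable (n : ℕ)

theorem natCast_div_lt_add_one_div (k : ℕ) : (k : ℝ) / (n + 1) < (k + 1) / (n + 1) := by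
  gcongr
  linarith

theorem Icc_subset_Icc_zero_one (k : Fin (n + 1)) :
    Icc ((k : ℝ) / (n + 1)) ((k + 1) / (n + 1)) ⊆ Icc 0 1 := by
  have hk : (k : ℝ) + 1 ≤ n + 1 := by exact_mod_cast k.isLt
  exact Icc_subset_Icc (by positivity) ((div_le_one (by positivity)).2 hk)

noncomputable def functional (k : ℕ) : Lp ℂ 1 μ₀₁ →L[ℂ] ℂ :=
  ((n : ℂ) + 1) • (L1.integralCLM' ℂ).comp
    (LpToLpRestrictCLM ℝ ℂ ℂ μ₀₁ 1 (Ioc (k / (n + 1)) ((k + 1) / (n + 1))))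

theorem functional_apply (k : ℕ) (f : Lp ℂ 1 μ₀₁) :
    functional n k f =
      ((n : ℂ) + 1) * ∫ t in ((k : ℝ) / (n + 1))..((k + 1) / (n + 1)), f t ∂μ₀₁ := by
  rw [functional, smul_apply,
    L1.integralCLM'_comp_LpToLpRestrictCLM_apply, smul_eq_mul,
    intervalIntegral.integral_of_le (natCast_div_lt_add_one_div n k).le]

noncomputable def bernsteinL1 (k : ℕ) : Lp ℂ 1 μ₀₁ :=
  (Continuous.integrableOn_Icc (by fun_prop) :
    IntegrableOn (fun x : ℝ => (((bernsteinPolynomial ℝ n k).eval x : ℝ) : ℂ)) (Icc 0 1)).toL1 _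

theorem coeFn_bernsteinL1 (k : ℕ) :
    bernsteinL1 n k =ᵐ[μ₀₁] fun x => (((bernsteinPolynomial ℝ n k).eval x : ℝ) : ℂ) :=
  Integrable.coeFn_toL1 _

noncomputable def matrix : Matrix (Fin (n + 1)) (Fin (n + 1)) ℝ :=
  .of fun k j => (n + 1) * ∫ t in ((k : ℝ) / (n + 1))..((k + 1) / (n + 1)),
    (bernsteinPolynomial ℝ n j).eval t

theorem of_functional_bernsteinL1 :
    Matrix.of (fun k j : Fin (n + 1) =>
      (functional n k : Dual ℂ (Lp ℂ 1 μ₀₁)) (bernsteinL1 n j)) = (matrix n).map (↑) := by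
  ext k j
  rw [Matrix.of_apply, ContinuousLinearMap.coe_coe, functional_apply,
    intervalIntegral.integral_congr_ae ((coeFn_bernsteinL1 n j).mono fun x hx _ => hx),
    intervalIntegral.integral_restrict_of_Ioc_subset (natCast_div_lt_add_one_div n k).le
      (Ioc_subset_Icc_self.trans (Icc_subset_Icc_zero_one n k)),
    intervalIntegral.integral_ofReal, Matrix.map_apply, matrix, Matrix.of_apply]
  push_cast
  rfl

theorem matrix_mem_rowStochastic : matrix n ∈ Matrix.rowStochastic ℝ (Fin (n + 1)) := by
  refine Matrix.mem_rowStochastic_iff_sum.2 ⟨fun k j => ?_, fun k => ?_⟩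
  · exact mul_nonneg (by positivity) (intervalIntegral.integral_nonneg
      (natCast_div_lt_add_one_div n k).le fun x hx =>
        bernsteinPolynomial.eval_nonneg n j (Icc_subset_Icc_zero_one n k hx))
  · simp only [matrix, Matrix.of_apply, ← Finset.mul_sum]
    rw [← intervalIntegral.integral_finsetSum fun j _ =>
      (Polynomial.continuous _).intervalIntegrable _ _]
    simp only [← eval_finsetSum, Fin.sum_univ_eq_sum_range (bernsteinPolynomial ℝ n),
      bernsteinPolynomial.sum, eval_one, intervalIntegral.integral_const, smul_eq_mul, mul_one]
    field_simp
    ring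

theorem matrix_diag_pos (k : Fin (n + 1)) : 0 < matrix n k k := by
  obtain ⟨h0, h1⟩ := (Icc_subset_Icc_iff (natCast_div_lt_add_one_div n k).le).1
    (Icc_subset_Icc_zero_one n k)
  exact mul_pos (by positivity) (intervalIntegral.intervalIntegral_pos_of_pos_on
    ((Polynomial.continuous _).intervalIntegrable _ _)
    (fun x hx => bernsteinPolynomial.eval_pos n (Nat.lt_succ_iff.1 k.isLt)
      ⟨h0.trans_lt hx.1, hx.2.trans_le h1⟩)
    (natCast_div_lt_add_one_div n k))

theorem eq_sum_smul (T : Lp ℂ 1 μ₀₁ →L[ℂ] Lp ℂ 1 μ₀₁)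
    (hT : ∀ f : Lp ℂ 1 μ₀₁, ∀ᵐ x ∂μ₀₁,
      (T f : ℝ → ℂ) x = ((n : ℂ) + 1) * ∑ k ∈ Finset.range (n + 1),
        (n.choose k : ℂ) * (x : ℂ) ^ k * (1 - (x : ℂ)) ^ (n - k) *
          ∫ t in ((k : ℝ) / ((n : ℝ) + 1))..(((k : ℝ) + 1) / ((n : ℝ) + 1)), (f : ℝ → ℂ) t ∂μ₀₁)
    (f : Lp ℂ 1 μ₀₁) : T f = ∑ k : Fin (n + 1), functional n k f • bernsteinL1 n k := by
  refine Lp.ext ?_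
  have hterm : ∀ᵐ x ∂μ₀₁, ∀ k : Fin (n + 1), (functional n k f • bernsteinL1 n k) x =
      functional n k f * (((bernsteinPolynomial ℝ n k).eval x : ℝ) : ℂ) :=
    ae_all_iff.2 fun k => by
      filter_upwards [Lp.coeFn_smul (functional n k f) (bernsteinL1 n k), coeFn_bernsteinL1 n k]
        with x hsmul hb
      rw [hsmul, Pi.smul_apply, hb, smul_eq_mul]
  filter_upwards [hT f, hterm, Lp.coeFn_fun_finsetSum Finset.univ
    fun k : Fin (n + 1) => functional n k f • bernsteinL1 n k] with x hTx hterm hsum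
  rw [hTx, hsum, Finset.sum_congr rfl fun k _ => hterm k, Finset.mul_sum, Fin.sum_univ_eq_sum_range
    (fun k => functional n k f * (((bernsteinPolynomial ℝ n k).eval x : ℝ) : ℂ))]
  refine Finset.sum_congr rfl fun k _ => ?_
  rw [functional_apply, bernsteinPolynomial.ofReal_eval]
  ring

end Kantorovich

/-- Let `T_n` be the Kantorovič operator regarded as a continuous
linear endomorphism of `L¹([0,1], ℂ)`, i.e., `T_n f` is (the class of) the
function `x ↦ (n+1) ∑_{k=0}^n C(n,k) x^k (1-x)^{n-k} ∫_{k/(n+1)}^{(k+1)/(n+1)} f`.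
Then `σ(T_n) ⊆ {λ : |λ| < 1} ∪ {1}`. -/
theorem kantorovich_spectrum_subset (n : ℕ)
    (T : Lp ℂ 1 (volume.restrict (Set.Icc (0 : ℝ) 1)) →L[ℂ]
          Lp ℂ 1 (volume.restrict (Set.Icc (0 : ℝ) 1)))
    (hT : ∀ f : Lp ℂ 1 (volume.restrict (Set.Icc (0 : ℝ) 1)),
      ∀ᵐ x ∂(volume.restrict (Set.Icc (0 : ℝ) 1)),
        (T f : ℝ → ℂ) x = ((n : ℂ) + 1) * ∑ k ∈ Finset.range (n + 1),
          (n.choose k : ℂ) * (x : ℂ) ^ k * (1 - (x : ℂ)) ^ (n - k) *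
            ∫ t in ((k : ℝ) / ((n : ℝ) + 1))..(((k : ℝ) + 1) / ((n : ℝ) + 1)),
              (f : ℝ → ℂ) t ∂(volume.restrict (Set.Icc (0 : ℝ) 1))) :
    spectrum ℂ T ⊆ {z : ℂ | ‖z‖ < 1} ∪ {1} := by
  intro μ hμ
  rcases lt_or_ge ‖μ‖ 1 with hμ1 | hμ1
  · exact Or.inl hμ1
  have hμ0 : μ ≠ 0 := by
    rintro rfl
    norm_num at hμ1
  have heig := hasEigenvalue_toLin'_of_mem_spectrum (Kantorovich.eq_sum_smul n T hT) hμ hμ0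
  rw [Kantorovich.of_functional_bernsteinL1] at heig
  exact Or.inr (Matrix.eq_one_of_hasEigenvalue_of_one_le_norm
    (Kantorovich.matrix_mem_rowStochastic n) (Kantorovich.matrix_diag_pos n) heig hμ1)
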